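/- Let (Ω,ρ) be a metric space with its Borel σ-algebra, P a Borel probability measure on Ω, and let P̂ be the empirical distribution of n i.i.d. samples from P. Let B ⊆ Ω be a Borel set and let 𝒮 be a finite Borel partition of B. Then E[ ∑_{S ∈ 𝒮} |P(S) − P̂(S)| ] ≤ min{ 2·P(B), √( P(B)·|𝒮| / n ) }. -/

import Mathlib

open MeasureTheory ENNReal

noncomputable section

/-- The set of couplings of two measures. -/
def couplings {Ω : Type*} [MeasurableSpace Ω] (P Q : Measure Ω) : Set (Measure (Ω × Ω)) :=
  {μ | μ.map Prod.fst = P ∧ μ.map Prod.snd = Q}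

/-- `W_r^r(P,Q)`, the `r`-th power of the `r`-Wasserstein distance. -/
def wassersteinPow {Ω : Type*} [MeasurableSpace Ω] [PseudoEMetricSpace Ω] (r : ℝ)
    (P Q : Measure Ω) : ℝ≥0∞ :=
  ⨅ μ ∈ couplings P Q, ∫⁻ p : Ω × Ω, edist p.1 p.2 ^ r ∂μ

/-- The `r`-Wasserstein distance. -/
def wasserstein {Ω : Type*} [MeasurableSpace Ω] [PseudoEMetricSpace Ω] (r : ℝ)
    (P Q : Measure Ω) : ℝ≥0∞ :=
  (wassersteinPow r P Q) ^ (1 / r)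

/-- The empirical measure of `n` samples. -/
def empiricalMeasure {Ω : Type*} [MeasurableSpace Ω] (n : ℕ) (x : Fin n → Ω) : Measure Ω :=
  (n : ℝ≥0∞)⁻¹ • ∑ i : Fin n, Measure.dirac (x i)

/-- `𝒮` is a countable-or-not Borel partition of the set `B`. -/
def IsBorelPartitionOf {Ω : Type*} [MeasurableSpace Ω] (𝒮 : Set (Set Ω)) (B : Set Ω) : Prop :=
  (∀ S ∈ 𝒮, MeasurableSet S) ∧ ⋃₀ 𝒮 = B ∧ 𝒮.PairwiseDisjoint id

/-- The resolution of a partition: the largest diameter of any of its elements. -/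
def partRes {Ω : Type*} [PseudoEMetricSpace Ω] (𝒮 : Set (Set Ω)) : ℝ≥0∞ :=
  ⨆ S ∈ 𝒮, EMetric.diam S

/-- The `ε`-covering number of a Borel set `B`: the minimal cardinality of a countable
Borel partition of `B` all of whose elements have diameter at most `ε`. -/
def coveringNumber {Ω : Type*} [MeasurableSpace Ω] [PseudoEMetricSpace Ω]
    (B : Set Ω) (ε : ℝ) : ℝ≥0∞ :=
  ⨅ (𝒮 : Set (Set Ω)) (_ : IsBorelPartitionOf 𝒮 B ∧ 𝒮.Countable ∧
      ∀ S ∈ 𝒮, EMetric.diam S ≤ ENNReal.ofReal ε), (𝒮.encard : ℝ≥0∞)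

/-- The separation of a set: the smallest distance between distinct points. -/
def eSep {Ω : Type*} [PseudoEMetricSpace Ω] (S : Set Ω) : ℝ≥0∞ :=
  ⨅ (x ∈ S) (y ∈ S) (_ : x ≠ y), edist x y

/-- `|a - b|` for extended nonnegative reals. -/
def ennrDiff (a b : ℝ≥0∞) : ℝ≥0∞ := (a - b) + (b - a)

/-- The `ℓ`-th metric moment of `P` about `x₀`. -/
def metricMoment {Ω : Type*} [MeasurableSpace Ω] [PseudoEMetricSpace Ω]
    (P : Measure Ω) (x₀ : Ω) (ℓ : ℝ) : ℝ≥0∞ :=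
  (∫⁻ y, edist x₀ y ^ ℓ ∂P) ^ (1 / ℓ)

end

/-! For a cell `S`, `n • P̂(S)` is a sum of `n` independent indicators of mean `P(S)`. Hence
`E|P(S) - P̂(S)| ≤ E[P(S) + P̂(S)] = 2 P(S)`, and by Cauchy–Schwarz `E|P(S) - P̂(S)|` is at most
the standard deviation `√(Var[1_S] / n) ≤ √(P(S) / n)`. Summing over the partition gives `2 P(B)`
in the first case, and Cauchy–Schwarz for `∑ √(P(S) / n)` gives `√(|𝒮| P(B) / n)` in the second. -/

open ProbabilityTheory

lemma ennrDiff_le_add (a b : ℝ≥0∞) : ennrDiff a b ≤ a + b :=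
  add_le_add tsub_le_self tsub_le_self

lemma Measurable.ennrDiff {α : Type*} [MeasurableSpace α] {f g : α → ℝ≥0∞}
    (hf : Measurable f) (hg : Measurable g) : Measurable fun x => ennrDiff (f x) (g x) :=
  (hf.sub hg).add (hg.sub hf)

lemma ennrDiff_eq_enorm_sub {a b : ℝ≥0∞} (ha : a ≠ ∞) (hb : b ≠ ∞) :
    ennrDiff a b = ‖a.toReal - b.toReal‖ₑ := by
  wlog hba : b ≤ a generalizing a b
  · rw [ennrDiff, add_comm, ← ennrDiff, this hb ha (le_of_not_ge hba), enorm_sub_rev]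
  rw [ennrDiff, tsub_eq_zero_of_le hba, add_zero, Real.enorm_eq_ofReal_abs,
    abs_of_nonneg (sub_nonneg.2 (toReal_mono ha hba)), ← toReal_sub_of_le hba ha,
    ofReal_toReal (sub_ne_top ha)]

lemma ENNReal.sum_rpow_half_le {ι : Type*} (s : Finset ι) (f : ι → ℝ≥0∞) :
    ∑ i ∈ s, f i ^ (1 / 2 : ℝ) ≤ ((s.card : ℝ≥0∞) * ∑ i ∈ s, f i) ^ (1 / 2 : ℝ) := by
  have h := rpow_sum_le_const_mul_sum_rpow s (fun i => f i ^ (1 / 2 : ℝ)) one_le_two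
  simp only [← rpow_mul] at h
  norm_num at h
  calc ∑ i ∈ s, f i ^ (1 / 2 : ℝ) = ((∑ i ∈ s, f i ^ (1 / 2 : ℝ)) ^ 2) ^ (1 / 2 : ℝ) := by
        rw [← rpow_natCast, ← rpow_mul]; norm_num
    _ ≤ _ := rpow_le_rpow h (by norm_num)

lemma lintegral_enorm_sub_integral_le_evariance_rpow {Ω : Type*} [MeasurableSpace Ω]
    {μ : Measure Ω} [IsProbabilityMeasure μ] {X : Ω → ℝ} (hX : AEStronglyMeasurable X μ) :
    ∫⁻ ω, ‖X ω - μ[X]‖ₑ ∂μ ≤ evariance X μ ^ (1 / 2 : ℝ) := by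
  have h := eLpNorm_le_eLpNorm_of_exponent_le (p := 1) (q := 2) one_le_two
    (hX.sub (aestronglyMeasurable_const (b := μ[X])))
  rw [eLpNorm_one_eq_lintegral_enorm,
    eLpNorm_eq_lintegral_rpow_enorm_toReal two_ne_zero ofNat_ne_top] at h
  simpa [evariance] using h

section Empirical

variable {Ω : Type*} [MeasurableSpace Ω] {n : ℕ} {S : Set Ω}

lemma empiricalMeasure_apply (x : Fin n → Ω) (hS : MeasurableSet S) :
    empiricalMeasure n x S = (n : ℝ≥0∞)⁻¹ * ∑ i, S.indicator 1 (x i) := by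
  simp [empiricalMeasure, Measure.finsetSum_apply, Measure.dirac_apply' _ hS]

lemma isProbabilityMeasure_empiricalMeasure (hn : 0 < n) (x : Fin n → Ω) :
    IsProbabilityMeasure (empiricalMeasure n x) := by
  constructor
  simp [empiricalMeasure_apply x MeasurableSet.univ, ENNReal.inv_mul_cancel, hn.ne']

lemma measurable_indicator_eval (hS : MeasurableSet S) (i : Fin n) :
    Measurable fun x : Fin n → Ω => S.indicator (1 : Ω → ℝ≥0∞) (x i) :=
  (measurable_one.indicator hS).comp (measurable_pi_apply i)

lemma measurable_empiricalMeasure_apply (hS : MeasurableSet S) :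
    Measurable fun x : Fin n → Ω => empiricalMeasure n x S := by
  simp_rw [empiricalMeasure_apply _ hS]
  exact measurable_const.mul <| Finset.measurable_sum _ fun i _ => measurable_indicator_eval hS i

lemma toReal_empiricalMeasure_apply (x : Fin n → Ω) (hS : MeasurableSet S) :
    (empiricalMeasure n x S).toReal = ∑ i, (n : ℝ)⁻¹ * S.indicator 1 (x i) := by
  have hfin : ∀ i, S.indicator (1 : Ω → ℝ≥0∞) (x i) ≠ ∞ := fun i => by
    by_cases hx : x i ∈ S <;> simp [hx]
  rw [empiricalMeasure_apply x hS, toReal_mul, toReal_sum fun i _ => hfin i, Finset.mul_sum]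
  congr 1 with i
  by_cases hx : x i ∈ S <;> simp [hx]

variable (P : Measure Ω) [IsProbabilityMeasure P]

lemma lintegral_empiricalMeasure_apply (hn : 0 < n) (hS : MeasurableSet S) :
    ∫⁻ x, empiricalMeasure n x S ∂(Measure.pi fun _ : Fin n => P) = P S := by
  have hind : ∀ i, ∫⁻ x, S.indicator 1 (x i) ∂(Measure.pi fun _ : Fin n => P) = P S := fun i => by
    rw [(measurePreserving_eval (fun _ : Fin n => P) i).lintegral_comp
      (measurable_one.indicator hS), lintegral_indicator_one hS]
  simp_rw [empiricalMeasure_apply _ hS]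
  rw [lintegral_const_mul _ (Finset.measurable_sum _ fun i _ => measurable_indicator_eval hS i),
    lintegral_finsetSum _ fun i _ => measurable_indicator_eval hS i]
  simp [hind, ← mul_assoc, ENNReal.inv_mul_cancel, hn.ne']

lemma variance_toReal_empiricalMeasure_apply_le (hS : MeasurableSet S) :
    Var[fun x => (empiricalMeasure n x S).toReal; Measure.pi fun _ : Fin n => P]
      ≤ P.real S / n := by
  have hmem : MemLp (fun y => (n : ℝ)⁻¹ * S.indicator (1 : Ω → ℝ) y) 2 P :=
    ((memLp_const (1 : ℝ)).indicator hS).const_mul _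
  have hind : Var[S.indicator 1; P] ≤ P.real S := by
    have hsq : S.indicator (1 : Ω → ℝ) ^ 2 = S.indicator 1 := by
      funext y; by_cases hy : y ∈ S <;> simp [hy]
    calc Var[S.indicator 1; P] ≤ P[S.indicator 1 ^ 2] :=
          variance_le_expectation_sq (stronglyMeasurable_const.indicator hS).aestronglyMeasurable
      _ = P.real S := by rw [hsq, integral_indicator_one hS]
  have hsum : (fun x : Fin n → Ω => (empiricalMeasure n x S).toReal)
      = ∑ i, fun x => (n : ℝ)⁻¹ * S.indicator 1 (x i) := by
    funext x; rw [toReal_empiricalMeasure_apply x hS, Finset.sum_apply]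
  rw [hsum, variance_sum_pi fun _ => hmem, variance_const_mul]
  simp only [Finset.sum_const, Finset.card_univ, Fintype.card_fin, nsmul_eq_mul]
  rcases n.eq_zero_or_pos with rfl | hn
  · simp
  calc (n : ℝ) * ((n : ℝ)⁻¹ ^ 2 * Var[S.indicator 1; P]) ≤ n * ((n : ℝ)⁻¹ ^ 2 * P.real S) := by
        gcongr
    _ = P.real S / n := by field_simp

end Empirical

section Deviation

variable {Ω : Type*} [MeasurableSpace Ω] (P : Measure Ω) [IsProbabilityMeasure P]
  {n : ℕ} {S : Set Ω}

lemma lintegral_ennrDiff_empiricalMeasure_le_two_mul (hn : 0 < n) (hS : MeasurableSet S) :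
    ∫⁻ x, ennrDiff (P S) (empiricalMeasure n x S) ∂(Measure.pi fun _ : Fin n => P)
      ≤ 2 * P S :=
  calc _ ≤ ∫⁻ x, P S + empiricalMeasure n x S ∂(Measure.pi fun _ : Fin n => P) :=
        lintegral_mono fun x => ennrDiff_le_add _ _
    _ = 2 * P S := by
        rw [lintegral_add_left measurable_const, lintegral_const, measure_univ, mul_one,
          lintegral_empiricalMeasure_apply P hn hS, two_mul]

lemma lintegral_ennrDiff_empiricalMeasure_le_rpow (hn : 0 < n) (hS : MeasurableSet S) :
    ∫⁻ x, ennrDiff (P S) (empiricalMeasure n x S) ∂(Measure.pi fun _ : Fin n => P)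
      ≤ (P S / n) ^ (1 / 2 : ℝ) := by
  set μ := Measure.pi fun _ : Fin n => P
  set Y := fun x : Fin n → Ω => (empiricalMeasure n x S).toReal
  have hle (x : Fin n → Ω) : empiricalMeasure n x S ≤ 1 :=
    have := isProbabilityMeasure_empiricalMeasure hn x
    prob_le_one
  have hY : MemLp Y 2 μ := by
    refine .of_bound (measurable_empiricalMeasure_apply hS).ennreal_toReal.aestronglyMeasurable
      1 (ae_of_all _ fun x => ?_)
    rw [Real.norm_eq_abs, abs_of_nonneg toReal_nonneg]
    exact toReal_mono one_ne_top (hle x)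
  have hmean : μ[Y] = (P S).toReal := by
    rw [integral_toReal (measurable_empiricalMeasure_apply hS).aemeasurable
      (ae_of_all _ fun x => (hle x).trans_lt one_lt_top), lintegral_empiricalMeasure_apply P hn hS]
  calc _ = ∫⁻ x, ‖Y x - μ[Y]‖ₑ ∂μ := lintegral_congr fun x => by
        rw [ennrDiff_eq_enorm_sub (measure_ne_top P S) ((hle x).trans_lt one_lt_top).ne,
          enorm_sub_rev, hmean]
    _ ≤ evariance Y μ ^ (1 / 2 : ℝ) := lintegral_enorm_sub_integral_le_evariance_rpow hY.1
    _ = ENNReal.ofReal Var[Y; μ] ^ (1 / 2 : ℝ) := by rw [hY.ofReal_variance_eq]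
    _ ≤ ENNReal.ofReal (P.real S / n) ^ (1 / 2 : ℝ) := by
        gcongr; exact variance_toReal_empiricalMeasure_apply_le P hS
    _ = (P S / n) ^ (1 / 2 : ℝ) := by
        rw [ofReal_div_of_pos (by exact_mod_cast hn), ofReal_natCast, measureReal_def,
          ofReal_toReal (measure_ne_top P S)]

end Deviation

theorem stmt_18_general {Ω : Type*} [MeasurableSpace Ω]
    (P : MeasureTheory.Measure Ω) [MeasureTheory.IsProbabilityMeasure P]
    (n : ℕ) (hn : 0 < n) (B : Set Ω)
    (𝒮 : Finset (Set Ω)) (hmeas : ∀ S ∈ 𝒮, MeasurableSet S)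
    (hdisj : (𝒮 : Set (Set Ω)).PairwiseDisjoint id)
    (hunion : ⋃₀ (𝒮 : Set (Set Ω)) = B) :
    ∫⁻ x, ∑ S ∈ 𝒮, ennrDiff (P S) (empiricalMeasure n x S)
        ∂(MeasureTheory.Measure.pi fun _ : Fin n => P)
      ≤ min (2 * P B) ((P B * 𝒮.card / n) ^ ((1 : ℝ) / 2)) := by
  have hPB : ∑ S ∈ 𝒮, P S = P B := by
    rw [← hunion, Set.sUnion_eq_biUnion]
    exact (measure_biUnion_finset hdisj hmeas).symm
  rw [lintegral_finsetSum _ fun S hS =>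
    measurable_const.ennrDiff (measurable_empiricalMeasure_apply (hmeas S hS))]
  refine le_min ?_ ?_
  · calc _ ≤ ∑ S ∈ 𝒮, 2 * P S := Finset.sum_le_sum fun S hS =>
          lintegral_ennrDiff_empiricalMeasure_le_two_mul P hn (hmeas S hS)
      _ = 2 * P B := by rw [← Finset.mul_sum, hPB]
  · calc _ ≤ ∑ S ∈ 𝒮, (P S / n) ^ (1 / 2 : ℝ) := Finset.sum_le_sum fun S hS =>
          lintegral_ennrDiff_empiricalMeasure_le_rpow P hn (hmeas S hS)
      _ ≤ (𝒮.card * ∑ S ∈ 𝒮, P S / n) ^ (1 / 2 : ℝ) := ENNReal.sum_rpow_half_le _ _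
      _ = (P B * 𝒮.card / n) ^ ((1 : ℝ) / 2) := by
          simp_rw [div_eq_mul_inv, ← Finset.sum_mul, hPB]
          ring_nf

/-- Expected total deviation of the empirical measure over a finite Borel partition of a
Borel set `B`. -/
theorem stmt_18 {Ω : Type*} [MeasurableSpace Ω]
    (P : MeasureTheory.Measure Ω) [MeasureTheory.IsProbabilityMeasure P]
    (n : ℕ) (hn : 0 < n) (B : Set Ω) (hB : MeasurableSet B)
    (𝒮 : Finset (Set Ω)) (hmeas : ∀ S ∈ 𝒮, MeasurableSet S)
    (hdisj : (𝒮 : Set (Set Ω)).PairwiseDisjoint id)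
    (hunion : ⋃₀ (𝒮 : Set (Set Ω)) = B) :
    ∫⁻ x, ∑ S ∈ 𝒮, ennrDiff (P S) (empiricalMeasure n x S)
        ∂(MeasureTheory.Measure.pi fun _ : Fin n => P)
      ≤ min (2 * P B) ((P B * 𝒮.card / n) ^ ((1 : ℝ) / 2)) :=
  stmt_18_general P n hn B 𝒮 hmeas hdisj hunion
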